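/- Consider finite sets W and S, a true prior p on W, a receiver prior q on W, a channel-composed likelihood p(ŝ|w) ≥ 0 with ∑_ŝ p(ŝ|w) = 1, and Hamming distortion d(w,ŵ) = 1 if w ≠ ŵ, 0 otherwise. Let the q-MAP decoder map each ŝ to ŵ_q(ŝ) ∈ argmax_w q(w)p(ŝ|w), and the p-MAP decoder map ŝ to ŵ_p(ŝ) ∈ argmax_w p(w)p(ŝ|w). The expected Hamming distortion of the q-MAP decoder equals that of the p-MAP decoder (for all choices within the argmax) if and only if argmax_w q(w)p(ŝ|w) ⊆ argmax_w p(w)p(ŝ|w) for every ŝ ∈ S. -/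
import Mathlib


/-- MAP decoding under a mismatched prior q attains the optimal expected
Hamming distortion (for all choices within the argmax) iff every q-MAP
optimizer is also a p-MAP optimizer for each received message. -/
theorem mismatched_map_optimal_iff {W S : Type*} [Fintype W] [Fintype S]
    [Nonempty W]
    (p q : W → ℝ) (hp0 : ∀ w, 0 ≤ p w) (hp1 : ∑ w, p w = 1)
    (hq0 : ∀ w, 0 ≤ q w) (hq1 : ∑ w, q w = 1)
    (lik : W → S → ℝ) (hl0 : ∀ w s, 0 ≤ lik w s) (hl1 : ∀ w, ∑ s, lik w s = 1) :
    (∀ gq gp : S → W,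
        (∀ s w, q w * lik w s ≤ q (gq s) * lik (gq s) s) →
        (∀ s w, p w * lik w s ≤ p (gp s) * lik (gp s) s) →
        1 - ∑ s, p (gq s) * lik (gq s) s = 1 - ∑ s, p (gp s) * lik (gp s) s) ↔
    (∀ (s : S) (w : W), (∀ w', q w' * lik w' s ≤ q w * lik w s) →
        (∀ w', p w' * lik w' s ≤ p w * lik w s)) := by
  classical
  -- choice of maximizers
  have hqmax : ∀ s : S, ∃ w : W, ∀ w', q w' * lik w' s ≤ q w * lik w s := by
    intro s
    obtain ⟨w, -, hw⟩ := Finset.exists_max_image (Finset.univ : Finset W)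
      (fun w => q w * lik w s) ⟨Classical.arbitrary W, Finset.mem_univ _⟩
    exact ⟨w, fun w' => hw w' (Finset.mem_univ _)⟩
  have hpmax : ∀ s : S, ∃ w : W, ∀ w', p w' * lik w' s ≤ p w * lik w s := by
    intro s
    obtain ⟨w, -, hw⟩ := Finset.exists_max_image (Finset.univ : Finset W)
      (fun w => p w * lik w s) ⟨Classical.arbitrary W, Finset.mem_univ _⟩
    exact ⟨w, fun w' => hw w' (Finset.mem_univ _)⟩
  choose fq hfq using hqmax
  choose fp hfp using hpmax
  constructor
  · intro h s₀ w₀ hw₀ w'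
    set gq : S → W := Function.update fq s₀ w₀ with hgqdef
    have hgq : ∀ s w, q w * lik w s ≤ q (gq s) * lik (gq s) s := by
      intro s w
      by_cases hs : s = s₀
      · subst hs; simp only [hgqdef, Function.update_self]; exact hw₀ w
      · simp only [hgqdef, Function.update_of_ne hs]; exact hfq s w
    have heq := h gq fp hgq (fun s w => hfp s w)
    have hsum : ∑ s, p (gq s) * lik (gq s) s = ∑ s, p (fp s) * lik (fp s) s := by
      linarith
    have hterm : ∀ s ∈ Finset.univ,
        p (gq s) * lik (gq s) s = p (fp s) * lik (fp s) s :=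
      (Finset.sum_eq_sum_iff_of_le (fun s _ => hfp s (gq s))).mp hsum
    have h0 : p (gq s₀) * lik (gq s₀) s₀ = p (fp s₀) * lik (fp s₀) s₀ :=
      hterm s₀ (Finset.mem_univ _)
    have hgq0 : gq s₀ = w₀ := Function.update_self _ _ _
    calc p w' * lik w' s₀ ≤ p (fp s₀) * lik (fp s₀) s₀ := hfp s₀ w'
      _ = p w₀ * lik w₀ s₀ := by rw [← h0, hgq0]
  · intro h gq gp hgq hgp
    have : ∑ s, p (gq s) * lik (gq s) s = ∑ s, p (gp s) * lik (gp s) s := by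
      apply Finset.sum_congr rfl
      intro s _
      have h1 : p (gp s) * lik (gp s) s ≤ p (gq s) * lik (gq s) s :=
        h s (gq s) (fun w' => hgq s w') (gp s)
      have h2 : p (gq s) * lik (gq s) s ≤ p (gp s) * lik (gp s) s := hgp s (gq s)
      linarith
    rw [this]
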